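/- arXiv:2602.06500 — 2 statements merged into one kernel-verified Lean document; each statement's English description precedes it below -/
import Mathlib

section
/- The momentum update map of the microcanonical integrator preserves the unit sphere: if ‖Π‖ = 1, ‖e‖ = 1, δ ∈ ℝ, and cosh δ + (e · Π) sinh δ > 0, then the vector B = (Π + (sinh δ + (e · Π)(cosh δ - 1)) e) / (cosh δ + (e · Π) sinh δ) satisfies ‖B‖ = 1. -/
open Matrix Real

theorem momentum_update_unit {d : ℕ} (p e : Fin d → ℝ) (δ : ℝ)
    (hp : p ⬝ᵥ p = 1) (he : e ⬝ᵥ e = 1)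
    (hden : 0 < Real.cosh δ + (e ⬝ᵥ p) * Real.sinh δ) :
    ((Real.cosh δ + (e ⬝ᵥ p) * Real.sinh δ)⁻¹ •
        (p + (Real.sinh δ + (e ⬝ᵥ p) * (Real.cosh δ - 1)) • e)) ⬝ᵥ
      ((Real.cosh δ + (e ⬝ᵥ p) * Real.sinh δ)⁻¹ •
        (p + (Real.sinh δ + (e ⬝ᵥ p) * (Real.cosh δ - 1)) • e)) = 1 := by
  have hpe : p ⬝ᵥ e = e ⬝ᵥ p := dotProduct_comm p e
  have hcs : Real.cosh δ ^ 2 - Real.sinh δ ^ 2 = 1 := Real.cosh_sq_sub_sinh_sq δ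
  have h0 : Real.cosh δ + (e ⬝ᵥ p) * Real.sinh δ ≠ 0 := ne_of_gt hden
  simp only [smul_dotProduct, dotProduct_smul, dotProduct_add, add_dotProduct,
    smul_eq_mul, hp, he, hpe]
  field_simp
  nlinarith [hcs, sq_nonneg (Real.sinh δ), sq_nonneg (e ⬝ᵥ p)]
end

section
/- The microcanonical momentum update is reversible: for unit vectors Π, e with the update B_δ defined as above, applying B_{-δ} to B_δ(Π) recovers Π, i.e., B_{-δ}(B_δ(Π)) = Π. -/
open Matrix

/-- The microcanonical momentum update `B_δ`. -/
noncomputable def momentumUpdate {d : ℕ} (e : Fin d → ℝ) (δ : ℝ) (p : Fin d → ℝ) :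
    Fin d → ℝ :=
  (Real.cosh δ + (e ⬝ᵥ p) * Real.sinh δ)⁻¹ •
    (p + (Real.sinh δ + (e ⬝ᵥ p) * (Real.cosh δ - 1)) • e)

theorem momentum_update_reversible {d : ℕ} (p e : Fin d → ℝ) (δ : ℝ)
    (hp : p ⬝ᵥ p = 1) (he : e ⬝ᵥ e = 1) :
    momentumUpdate e (-δ) (momentumUpdate e δ p) = p := by
  set c := Real.cosh δ with hc
  set s := Real.sinh δ with hs
  have hcs : c ^ 2 - s ^ 2 = 1 := Real.cosh_sq_sub_sinh_sq δ
  have hA2 : (e ⬝ᵥ p) ^ 2 ≤ 1 := by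
    have h := Finset.sum_mul_sq_le_sq_mul_sq Finset.univ e p
    simp only [dotProduct] at hp he ⊢
    calc (∑ i, e i * p i) ^ 2 ≤ (∑ i, e i ^ 2) * ∑ i, p i ^ 2 := h
    _ = 1 := by simp only [pow_two]; rw [hp, he]; norm_num
  set A := e ⬝ᵥ p with hAdef
  have hD : 0 < c + A * s := by
    nlinarith [Real.cosh_pos δ, sq_nonneg (A * c + s), sq_nonneg (c + A * s)]
  have hD' : c + A * s ≠ 0 := ne_of_gt hD
  have hq : e ⬝ᵥ ((c + A * s)⁻¹ • (p + (s + A * (c - 1)) • e)) =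
      (c + A * s)⁻¹ * (A * c + s) := by
    simp only [dotProduct_smul, dotProduct_add, dotProduct_smul, he,
      ← hAdef, smul_eq_mul]
    ring
  funext i
  simp only [momentumUpdate, Real.cosh_neg, Real.sinh_neg, ← hc, ← hs, ← hAdef, hq,
    Pi.smul_apply, Pi.add_apply, smul_eq_mul]
  have hD2 : c + (c + A * s)⁻¹ * (A * c + s) * -s = (c + A * s)⁻¹ := by
    field_simp
    linear_combination hcs
  rw [hD2, inv_inv]
  field_simp
  ring_nf
  linear_combination (A * e i) * hcs
end
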